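/- The modified Hamster-Wheel operator | is not a distance operator: there is no pseudo-distance S = ⟨C, ≺, g⟩ on 𝒱 such that V | W = V |_S W for all V, W ⊆ 𝒱. -/

import Mathlib

/-- `lt` is a strict total order on `C`. -/
def StrictTotalOrder' {C : Type*} (lt : C → C → Prop) : Prop :=
  (∀ c, ¬ lt c c) ∧ (∀ a b c, lt a b → lt b c → lt a c) ∧
  (∀ a b, a ≠ b → lt a b ∨ lt b a)

/-- The operator induced by a pseudo-distance `⟨C, lt, d⟩`:
`V |_D W = {w ∈ W : ∃ v ∈ V, ∀ v' ∈ V, ∀ w' ∈ W, d(v,w) ⪯ d(v',w')}`. -/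
def inducedOp {𝒱 C : Type*} (lt : C → C → Prop) (d : 𝒱 → 𝒱 → C)
    (A B : Set 𝒱) : Set 𝒱 :=
  {w ∈ B | ∃ v ∈ A, ∀ v' ∈ A, ∀ w' ∈ B, lt (d v w) (d v' w') ∨ d v w = d v' w'}

/-- The elements `v 1, …, v m, w 1, …, w m` are `2m` pairwise distinct elements. -/
def hwDistinct {𝒱 : Type*} (m : ℕ) (v w : ℕ → 𝒱) : Prop :=
  (∀ i ∈ Set.Icc 1 m, ∀ j ∈ Set.Icc 1 m, v i ≠ w j) ∧
  (∀ i ∈ Set.Icc 1 m, ∀ j ∈ Set.Icc 1 m, v i = v j → i = j) ∧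
  (∀ i ∈ Set.Icc 1 m, ∀ j ∈ Set.Icc 1 m, w i = w j → i = j)

/-- `X = {v 1, …, v m, w 1, …, w m}`. -/
def hwX {𝒱 : Type*} (m : ℕ) (v w : ℕ → 𝒱) : Set 𝒱 :=
  {x | ∃ i ∈ Set.Icc 1 m, x = v i ∨ x = w i}

open Classical in
/-- The Hamster-Wheel pseudo-distance `d : 𝒱 × 𝒱 → ℝ`. -/
noncomputable def hwD {𝒱 : Type*} (m : ℕ) (v w : ℕ → 𝒱) (a b : 𝒱) : ℝ :=
  if a = b then 0
  else if ¬ (({a, b} : Set 𝒱) ⊆ hwX m v w) then 1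
  else if (∃ i ∈ Set.Icc 1 m, ∃ j ∈ Set.Icc 1 m, a = v i ∧ b = v j) ∨
      (∃ i ∈ Set.Icc 1 m, ∃ j ∈ Set.Icc 1 m, a = w i ∧ b = w j) then 1.1
  else if ∃ i ∈ Set.Icc 1 m, ({a, b} : Set 𝒱) = {v i, w i} then 1.4
  else if ∃ i ∈ Set.Icc 1 m, ∃ j ∈ Set.Icc 1 m,
      ({a, b} : Set 𝒱) = {v i, w j} ∧ ((i : ℤ) - j).natAbs ∈ ({1, m - 1} : Set ℕ) then 2
  else 1.2

open Classical in
/-- The modified Hamster-Wheel operator `|` on `𝒫(𝒱)`. -/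
noncomputable def hwOp {𝒱 : Type*} (m : ℕ) (v w : ℕ → 𝒱) (A B : Set 𝒱) : Set 𝒱 :=
  if A = ({v m, v 1} : Set 𝒱) ∧ B = ({w m, w 1} : Set 𝒱) then {w m}
  else if A = ({w m, w 1} : Set 𝒱) ∧ B = ({v m, v 1} : Set 𝒱) then {v m}
  else inducedOp (· < ·) (hwD m v w) A B

/-!
Think of the `v i` and `w i` as the two rims of a wheel and of the pairs `(v i, w i)` as its
rungs. Suppose a pseudo-distance `g` induced `|`. Away from the two modified arguments `|`
is induced by the real-valued `d`, and the choices it makes reveal comparisons of `g`: from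
`{v i} | {w i, w j} = {w i}` for neighbours `i`, `j` we get `g (v i) (w i) ≺ g (v i) (w j)`,
and then `{v i, v (i+1)} | {w i, w (i+1)} = {w i, w (i+1)}` is only possible if the two rungs
have the same `g`-length. Going round the wheel, rungs `1` and `m` have equal length, so `w 1`
belongs to `{v m, v 1} |_g {w m, w 1}`, which the modified operator sets to `{w m}`.
-/

open Set

theorem StrictTotalOrder'.isStrictTotalOrder {C : Type*} {lt : C → C → Prop}
    (h : StrictTotalOrder' lt) : IsStrictTotalOrder C lt where
  irrefl := h.1
  trans := h.2.1
  trichotomous a b hab hba := by_contra fun hne => (h.2.2 a b hne).elim hab hba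

section InducedOp

variable {𝒱 C : Type*} [LinearOrder C]

theorem mem_inducedOp_iff (d : 𝒱 → 𝒱 → C) {A B : Set 𝒱} {u : 𝒱} :
    u ∈ inducedOp (· < ·) d A B ↔ u ∈ B ∧ ∃ v ∈ A, ∀ v' ∈ A, ∀ w' ∈ B, d v u ≤ d v' w' := by
  simp only [inducedOp, mem_ofPred_eq, ← le_iff_lt_or_eq]

theorem mem_inducedOp_singleton_pair_iff (d : 𝒱 → 𝒱 → C) {x p q : 𝒱} :
    q ∈ inducedOp (· < ·) d {x} {p, q} ↔ d x q ≤ d x p := by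
  simp [mem_inducedOp_iff]

theorem mem_inducedOp_pair_pair_iff (d : 𝒱 → 𝒱 → C) {x y p q : 𝒱}
    (hx : d x p < d x q) (hy : d y q < d y p) :
    q ∈ inducedOp (· < ·) d {x, y} {p, q} ↔ d y q ≤ d x p := by
  simp only [mem_inducedOp_iff, mem_insert_iff, mem_singleton_iff, forall_eq_or_imp, forall_eq,
    exists_eq_or_imp, exists_eq_left, or_true, true_and]
  constructor
  · rintro (h | h)
    · exact absurd h.1.1 hx.not_ge
    · exact h.1.1
  · exact fun h => Or.inr ⟨⟨h, (h.trans_lt hx).le⟩, hy.le, le_rfl⟩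

variable {C' : Type*} [LinearOrder C'] {d : 𝒱 → 𝒱 → C} {g : 𝒱 → 𝒱 → C'}

theorem lt_of_inducedOp_singleton_pair_eq {x p q : 𝒱}
    (h : inducedOp (· < ·) d {x} {p, q} = inducedOp (· < ·) g {x} {p, q})
    (hd : d x p < d x q) : g x p < g x q := by
  have hq : q ∉ inducedOp (· < ·) g {x} {p, q} := by
    rw [← h, mem_inducedOp_singleton_pair_iff]
    exact hd.not_ge
  rwa [mem_inducedOp_singleton_pair_iff, not_le] at hq

theorem eq_of_inducedOp_pair_pair_eq {x y p q : 𝒱}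
    (h : inducedOp (· < ·) d {x, y} {p, q} = inducedOp (· < ·) g {x, y} {p, q})
    (hdx : d x p < d x q) (hdy : d y q < d y p) (hd : d x p = d y q)
    (hgx : g x p < g x q) (hgy : g y q < g y p) : g x p = g y q := by
  have hq : q ∈ inducedOp (· < ·) g {x, y} {p, q} := by
    rw [← h, mem_inducedOp_pair_pair_iff d hdx hdy]
    exact hd.ge
  have hp : p ∈ inducedOp (· < ·) g {x, y} {p, q} := by
    rw [← h, pair_comm x, pair_comm p, mem_inducedOp_pair_pair_iff d hdy hdx]
    exact hd.le
  rw [mem_inducedOp_pair_pair_iff g hgx hgy] at hq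
  rw [pair_comm x, pair_comm p, mem_inducedOp_pair_pair_iff g hgy hgx] at hp
  exact le_antisymm hp hq

end InducedOp

namespace hwDistinct

variable {𝒱 : Type*} {m : ℕ} {v w : ℕ → 𝒱} {i j k l : ℕ}

theorem v_ne_w (hd : hwDistinct m v w) (hi : i ∈ Icc 1 m) (hj : j ∈ Icc 1 m) : v i ≠ w j :=
  hd.1 i hi j hj

theorem v_inj (hd : hwDistinct m v w) (hi : i ∈ Icc 1 m) (hj : j ∈ Icc 1 m) :
    v i = v j ↔ i = j :=
  ⟨hd.2.1 i hi j hj, congrArg v⟩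

theorem w_inj (hd : hwDistinct m v w) (hi : i ∈ Icc 1 m) (hj : j ∈ Icc 1 m) :
    w i = w j ↔ i = j :=
  ⟨hd.2.2 i hi j hj, congrArg w⟩

theorem pair_v_w_eq_iff (hd : hwDistinct m v w) (hi : i ∈ Icc 1 m) (hj : j ∈ Icc 1 m)
    (hk : k ∈ Icc 1 m) (hl : l ∈ Icc 1 m) :
    ({v i, w j} : Set 𝒱) = {v k, w l} ↔ i = k ∧ j = l := by
  rw [pair_eq_pair_iff, hd.v_inj hi hk, hd.w_inj hj hl]
  exact or_iff_left fun h => hd.v_ne_w hi hl h.1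

end hwDistinct

def hwAdjacent (m i j : ℕ) : Prop :=
  ((i : ℤ) - j).natAbs ∈ ({1, m - 1} : Set ℕ)

theorem hwAdjacent.symm {m i j : ℕ} (h : hwAdjacent m i j) : hwAdjacent m j i := by
  rwa [hwAdjacent, ← Int.natAbs_neg, neg_sub]

theorem hwAdjacent_succ (m i : ℕ) : hwAdjacent m i (i + 1) := by
  simp [hwAdjacent]

theorem hwAdjacent_last_one {m : ℕ} (hm : 1 ≤ m) : hwAdjacent m m 1 := by
  simp only [hwAdjacent, mem_insert_iff, mem_singleton_iff]
  omega

section HamsterWheel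

variable {𝒱 : Type*} {m : ℕ} {v w : ℕ → 𝒱} {i j : ℕ}

open Classical in
theorem hwD_v_w (hd : hwDistinct m v w) (hi : i ∈ Icc 1 m) (hj : j ∈ Icc 1 m) :
    hwD m v w (v i) (w j) = if i = j then 1.4 else if hwAdjacent m i j then 2 else 1.2 := by
  have hX : ({v i, w j} : Set 𝒱) ⊆ hwX m v w :=
    insert_subset_iff.2 ⟨⟨i, hi, Or.inl rfl⟩, singleton_subset_iff.2 ⟨j, hj, Or.inr rfl⟩⟩
  have hmixed : ¬((∃ a ∈ Icc 1 m, ∃ b ∈ Icc 1 m, v i = v a ∧ w j = v b) ∨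
      (∃ a ∈ Icc 1 m, ∃ b ∈ Icc 1 m, v i = w a ∧ w j = w b)) := by
    rintro (⟨a, -, b, hb, -, h⟩ | ⟨a, ha, b, -, h, -⟩)
    · exact hd.v_ne_w hb hj h.symm
    · exact hd.v_ne_w hi ha h
  have hrung : (∃ k ∈ Icc 1 m, ({v i, w j} : Set 𝒱) = {v k, w k}) ↔ i = j := by
    refine ⟨fun ⟨k, hk, h⟩ => ?_, fun h => ⟨i, hi, by rw [h]⟩⟩
    obtain ⟨rfl, rfl⟩ := (hd.pair_v_w_eq_iff hi hj hk hk).1 h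
    rfl
  have hneighbour : (∃ a ∈ Icc 1 m, ∃ b ∈ Icc 1 m, ({v i, w j} : Set 𝒱) = {v a, w b} ∧
      ((a : ℤ) - b).natAbs ∈ ({1, m - 1} : Set ℕ)) ↔ hwAdjacent m i j := by
    refine ⟨fun ⟨a, ha, b, hb, h, hab⟩ => ?_, fun h => ⟨i, hi, j, hj, rfl, h⟩⟩
    obtain ⟨rfl, rfl⟩ := (hd.pair_v_w_eq_iff hi hj ha hb).1 h
    exact hab
  rw [hwD, if_neg (hd.v_ne_w hi hj), if_neg (not_not_intro hX), if_neg hmixed]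
  simp only [hrung, hneighbour]

theorem hwD_v_w_self_lt (hd : hwDistinct m v w) (hi : i ∈ Icc 1 m) (hj : j ∈ Icc 1 m)
    (hij : i ≠ j) (hadj : hwAdjacent m i j) :
    hwD m v w (v i) (w i) < hwD m v w (v i) (w j) := by
  rw [hwD_v_w hd hi hi, hwD_v_w hd hi hj, if_pos rfl, if_neg hij, if_pos hadj]
  norm_num

theorem hwD_v_w_self_eq (hd : hwDistinct m v w) (hi : i ∈ Icc 1 m) (hj : j ∈ Icc 1 m) :
    hwD m v w (v i) (w i) = hwD m v w (v j) (w j) := by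
  rw [hwD_v_w hd hi hi, hwD_v_w hd hj hj, if_pos rfl, if_pos rfl]

theorem hwOp_eq_inducedOp_of_v_pair (hm : 1 ≤ m) (hd : hwDistinct m v w) (hi : i ∈ Icc 1 m)
    (hj : j ∈ Icc 1 m) (hij : ¬(i = m ∧ j = 1 ∨ i = 1 ∧ j = m)) (B : Set 𝒱) :
    hwOp m v w {v i, v j} B = inducedOp (· < ·) (hwD m v w) {v i, v j} B := by
  have h1m : 1 ∈ Icc 1 m := ⟨le_rfl, hm⟩
  have hmm : m ∈ Icc 1 m := ⟨hm, le_rfl⟩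
  have hv : ({v i, v j} : Set 𝒱) ≠ {v m, v 1} := by
    rwa [Ne, pair_eq_pair_iff, hd.v_inj hi hmm, hd.v_inj hj h1m, hd.v_inj hi h1m,
      hd.v_inj hj hmm]
  have hw : ({v i, v j} : Set 𝒱) ≠ {w m, w 1} :=
    ne_of_mem_of_not_mem' (mem_insert _ _) fun h =>
      h.elim (hd.v_ne_w hi hmm) fun h => hd.v_ne_w hi h1m (mem_singleton_iff.1 h)
  rw [hwOp, if_neg fun h => hv h.1, if_neg fun h => hw h.1]

variable {C : Type*} [LinearOrder C] {g : 𝒱 → 𝒱 → C}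

theorem rung_lt_of_hwOp_eq (hm : 2 ≤ m) (hd : hwDistinct m v w)
    (hop : ∀ A B : Set 𝒱, hwOp m v w A B = inducedOp (· < ·) g A B)
    (hi : i ∈ Icc 1 m) (hj : j ∈ Icc 1 m) (hij : i ≠ j) (hadj : hwAdjacent m i j) :
    g (v i) (w i) < g (v i) (w j) := by
  refine lt_of_inducedOp_singleton_pair_eq ?_ (hwD_v_w_self_lt hd hi hj hij hadj)
  rw [← hop, ← pair_eq_singleton, hwOp_eq_inducedOp_of_v_pair (by omega) hd hi hi (by omega)]

theorem rung_eq_succ_of_hwOp_eq (hm : 3 ≤ m) (hd : hwDistinct m v w)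
    (hop : ∀ A B : Set 𝒱, hwOp m v w A B = inducedOp (· < ·) g A B)
    (hi : 1 ≤ i) (hi' : i + 1 ≤ m) : g (v i) (w i) = g (v (i + 1)) (w (i + 1)) := by
  have hi : i ∈ Icc 1 m := ⟨hi, by omega⟩
  have hi' : i + 1 ∈ Icc 1 m := ⟨by omega, hi'⟩
  have hadj := hwAdjacent_succ m i
  refine eq_of_inducedOp_pair_pair_eq ?_ (hwD_v_w_self_lt hd hi hi' (by omega) hadj)
    (hwD_v_w_self_lt hd hi' hi (by omega) hadj.symm) (hwD_v_w_self_eq hd hi hi')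
    (rung_lt_of_hwOp_eq (by omega) hd hop hi hi' (by omega) hadj)
    (rung_lt_of_hwOp_eq (by omega) hd hop hi' hi (by omega) hadj.symm)
  rw [← hop, hwOp_eq_inducedOp_of_v_pair (by omega) hd hi hi' (by omega)]

theorem rung_eq_of_hwOp_eq (hm : 3 ≤ m) (hd : hwDistinct m v w)
    (hop : ∀ A B : Set 𝒱, hwOp m v w A B = inducedOp (· < ·) g A B)
    (hi : 1 ≤ i) (hi' : i ≤ m) : g (v 1) (w 1) = g (v i) (w i) := by
  induction i, hi using Nat.le_induction with
  | base => rfl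
  | succ n hn ih => exact (ih (by omega)).trans (rung_eq_succ_of_hwOp_eq hm hd hop hn hi')

theorem hwOp_ne_inducedOp (hm : 3 ≤ m) (hd : hwDistinct m v w) :
    ¬ ∀ A B : Set 𝒱, hwOp m v w A B = inducedOp (· < ·) g A B := by
  intro hop
  have h1 : 1 ∈ Icc 1 m := ⟨le_rfl, by omega⟩
  have hm' : m ∈ Icc 1 m := ⟨by omega, le_rfl⟩
  have hadj := hwAdjacent_last_one (m := m) (by omega)
  have hlt_m := rung_lt_of_hwOp_eq (by omega) hd hop hm' h1 (by omega) hadj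
  have hlt_1 := rung_lt_of_hwOp_eq (by omega) hd hop h1 hm' (by omega) hadj.symm
  have hw1 : w 1 ∈ inducedOp (· < ·) g {v m, v 1} {w m, w 1} := by
    rw [mem_inducedOp_pair_pair_iff g hlt_m hlt_1]
    exact (rung_eq_of_hwOp_eq hm hd hop h1.2 le_rfl).le
  rw [← hop, hwOp, if_pos ⟨rfl, rfl⟩, mem_singleton_iff, hd.w_inj h1 hm'] at hw1
  omega

end HamsterWheel

theorem stmt4 {𝒱 : Type*} (m : ℕ) (hm : 4 ≤ m) (v w : ℕ → 𝒱)
    (hdist : hwDistinct m v w) :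
    ¬ ∃ (C : Type*) (lt : C → C → Prop) (g : 𝒱 → 𝒱 → C),
      Nonempty C ∧ StrictTotalOrder' lt ∧
      ∀ A B : Set 𝒱, hwOp m v w A B = inducedOp lt g A B := by
  rintro ⟨C, lt, g, -, hlt, hop⟩
  have := hlt.isStrictTotalOrder
  classical
  let := linearOrderOfSTO lt
  exact hwOp_ne_inducedOp (by omega) hdist hop
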